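/- Let h be a complete Bernstein function, r > 0 and ξ ∈ ℂ ∖ (−∞, 0]. Then (1/√2)·(|ξ|/(r+|ξ|))·(Re √ξ / |√ξ|)·h(r) ≤ |h(ξ)| ≤ √2·((r+|ξ|)/r)·(|√ξ|/Re √ξ)·h(r), where √ξ denotes the principal branch of the square root. -/

import Mathlib

/-!
For `Re z > 0` put `F z = h (z²) / z`. If `h` is not constant, the reflection principle and the
open mapping theorem show that `h` maps the slit plane into itself, and Phragmén–Lindelöf applied
to `w ↦ exp (i w - i log h(eʷ))` on a horizontal strip shows `0 ≤ arg h(ξ) ≤ arg ξ` for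
`Im ξ ≥ 0`. Hence `|arg F z| ≤ |arg z| < π/2`: `F` maps the right half-plane into itself. The
Schwarz–Pick lemma for the right half-plane compares `F (√ξ)` with `F (√r) = h(r) / √r`, which
gives the two-sided bound.
-/

/-- A complete Bernstein function (equivalent characterisation): holomorphic on
`ℂ ∖ (−∞, 0]`, nonnegative on `(0, ∞)`, and with `Im f(ξ) ≥ 0` on the upper
half-plane. -/
def IsCBF (f : ℂ → ℂ) : Prop :=
  DifferentiableOn ℂ f {ξ : ℂ | 0 < ξ.re ∨ ξ.im ≠ 0} ∧
  (∀ x : ℝ, 0 < x → (f x).im = 0 ∧ 0 ≤ (f x).re) ∧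
  (∀ ξ : ℂ, 0 < ξ.im → 0 ≤ (f ξ).im)

open Complex Set Filter
open scoped Real Topology ComplexConjugate

namespace Complex

lemma isPreconnected_slitPlane : IsPreconnected slitPlane :=
  (starConvex_one_slitPlane.isPathConnected one_mem_slitPlane).isConnected.isPreconnected

lemma conj_mem_slitPlane {z : ℂ} (hz : z ∈ slitPlane) : conj z ∈ slitPlane := by
  rw [mem_slitPlane_iff] at hz ⊢
  simpa using hz

lemma exists_pos_eq_ofReal_of_im_eq_zero {ξ : ℂ} (hξ : ξ ∈ slitPlane) (him : ξ.im = 0) :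
    ∃ x : ℝ, 0 < x ∧ ξ = x :=
  ⟨ξ.re, (mem_slitPlane_iff.1 hξ).resolve_right (not_not.2 him), Complex.ext rfl (by simp [him])⟩

lemma sq_mem_slitPlane_of_re_pos {z : ℂ} (hz : 0 < z.re) : z ^ 2 ∈ slitPlane := by
  rcases eq_or_ne z.im 0 with h0 | h0
  · exact Or.inl (by simp [sq, h0, hz])
  · exact Or.inr (by simpa [sq, ← two_mul, mul_comm z.im] using ⟨hz.ne', h0⟩)

lemma exp_mem_slitPlane_of_abs_im_lt {w : ℂ} (hw : |w.im| < π) : exp w ∈ slitPlane := by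
  obtain ⟨h1, h2⟩ := abs_lt.1 hw
  rw [mem_slitPlane_iff_arg, arg_exp, (toIocMod_eq_self _).2 ⟨h1, by linarith⟩]
  exact ⟨h2.ne, exp_ne_zero w⟩

lemma re_cpow_one_half_pos {ξ : ℂ} (hξ : ξ ∈ slitPlane) : 0 < (ξ ^ ((1 : ℂ) / 2)).re := by
  rw [one_div, cpow_inv_two_re, Real.sqrt_pos]
  rcases mem_slitPlane_iff.1 hξ with hre | him
  · linarith [norm_nonneg ξ]
  · linarith [neg_abs_le ξ.re, abs_re_lt_norm.2 him]

lemma re_div_eq_norm_mul_cos_arg_sub (u z : ℂ) :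
    (u / z).re = ‖u‖ * Real.cos (arg u - arg z) / ‖z‖ := by
  rcases eq_or_ne z 0 with rfl | hz
  · simp
  have hz' : ‖z‖ ≠ 0 := norm_ne_zero_iff.2 hz
  rw [div_re, Real.cos_sub, normSq_eq_norm_sq, ← norm_mul_cos_arg u, ← norm_mul_sin_arg u,
    ← norm_mul_cos_arg z, ← norm_mul_sin_arg z]
  field_simp

lemma norm_sub_lt_norm_add_conj {a b : ℂ} (ha : 0 < a.re) (hb : 0 < b.re) :
    ‖a - b‖ < ‖a + conj b‖ := by
  rw [← sq_lt_sq₀ (norm_nonneg _) (norm_nonneg _), Complex.sq_norm, Complex.sq_norm,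
    normSq_apply, normSq_apply]
  simp only [sub_re, sub_im, add_re, add_im, conj_re, conj_im]
  nlinarith

lemma add_conj_ne_zero {a b : ℂ} (ha : 0 < a.re) (hb : 0 < b.re) : a + conj b ≠ 0 :=
  norm_pos_iff.1 ((norm_nonneg _).trans_lt (norm_sub_lt_norm_add_conj ha hb))

lemma one_sub_ne_zero_of_norm_lt_one {u : ℂ} (hu : ‖u‖ < 1) : 1 - u ≠ 0 :=
  sub_ne_zero.2 fun h ↦ by simp [← h] at hu

lemma re_cayley_pos {w u : ℂ} (hw : 0 < w.re) (hu : ‖u‖ < 1) :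
    0 < ((w + conj w * u) / (1 - u)).re := by
  have hu2 : normSq u < 1 := by
    rw [normSq_eq_norm_sq]
    exact pow_lt_one₀ (norm_nonneg _) hu two_ne_zero
  have key : ((w + conj w * u) / (1 - u)).re = w.re * (1 - normSq u) / normSq (1 - u) := by
    rw [div_re, normSq_apply u]
    simp only [add_re, add_im, mul_re, mul_im, conj_re, conj_im, sub_re, sub_im, one_re, one_im]
    ring
  rw [key]
  exact div_pos (mul_pos hw (by linarith)) (normSq_pos.2 (one_sub_ne_zero_of_norm_lt_one hu))

/-- Schwarz–Pick lemma for the right half-plane: the Cayley map `u ↦ (w + w̄ u) / (1 - u)` sends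
the unit disc onto the right half-plane and `0` to `w`, and `v ↦ (v - F w) / (v + conj (F w))`
sends the right half-plane into the unit disc, so the Schwarz lemma applies to the composite. -/
theorem norm_sub_mul_le_of_mapsTo_re_pos {F : ℂ → ℂ}
    (hF : DifferentiableOn ℂ F {z | 0 < z.re}) (hmaps : MapsTo F {z | 0 < z.re} {z | 0 < z.re})
    {z w : ℂ} (hz : 0 < z.re) (hw : 0 < w.re) :
    ‖F z - F w‖ * ‖z + conj w‖ ≤ ‖z - w‖ * ‖F z + conj (F w)‖ := by
  have hFw : 0 < (F w).re := hmaps hw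
  set C : ℂ → ℂ := fun u ↦ (w + conj w * u) / (1 - u)
  set G : ℂ → ℂ := fun u ↦ (F (C u) - F w) / (F (C u) + conj (F w))
  have hC : MapsTo C (Metric.ball 0 1) {z | 0 < z.re} :=
    fun u hu ↦ re_cayley_pos hw (mem_ball_zero_iff.1 hu)
  have hCd : DifferentiableOn ℂ C (Metric.ball 0 1) := fun u hu ↦
    ((differentiableAt_const _).add ((differentiableAt_const _).mul differentiableAt_id)).div
      ((differentiableAt_const _).sub differentiableAt_id)
      (one_sub_ne_zero_of_norm_lt_one (mem_ball_zero_iff.1 hu)) |>.differentiableWithinAt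
  have hFC : DifferentiableOn ℂ (fun u ↦ F (C u)) (Metric.ball 0 1) := hF.comp hCd hC
  have hGd : DifferentiableOn ℂ G (Metric.ball 0 1) :=
    (hFC.sub_const _).div (hFC.add_const _) fun u hu ↦ add_conj_ne_zero (hmaps (hC hu)) hFw
  have hGmaps : MapsTo G (Metric.ball 0 1) (Metric.closedBall 0 1) := fun u hu ↦ by
    rw [mem_closedBall_zero_iff, norm_div,
      div_le_one (norm_pos_iff.2 (add_conj_ne_zero (hmaps (hC hu)) hFw))]
    exact (norm_sub_lt_norm_add_conj (hmaps (hC hu)) hFw).le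
  have hG0 : G 0 = 0 := by simp [G, C]
  have hzw : z + conj w ≠ 0 := add_conj_ne_zero hz hw
  set u₀ := (z - w) / (z + conj w) with hu₀_def
  have hu₀ : ‖u₀‖ < 1 := by
    rw [norm_div, div_lt_one (norm_pos_iff.2 hzw)]
    exact norm_sub_lt_norm_add_conj hz hw
  have hCu₀ : C u₀ = z := by
    have hww : w + conj w ≠ 0 := add_conj_ne_zero hw hw
    have hden : 1 - u₀ = (w + conj w) / (z + conj w) := by
      rw [hu₀_def]; field_simp; ring
    have hnum : w + conj w * u₀ = z * (w + conj w) / (z + conj w) := by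
      rw [hu₀_def]; field_simp; ring
    simp only [C, hden, hnum]
    field_simp
  have hSchwarz := norm_le_norm_of_mapsTo_ball hGd hGmaps hG0 hu₀
  simp only [G, hCu₀, u₀, norm_div] at hSchwarz
  rwa [div_le_div_iff₀ (norm_pos_iff.2 (add_conj_ne_zero (hmaps hz) hFw))
    (norm_pos_iff.2 hzw)] at hSchwarz

theorem harnack_of_norm_sub_mul_le {v z : ℂ} {A W : ℝ} (hA : 0 ≤ A)
    (h : ‖v - A‖ * ‖z + W‖ ≤ ‖z - W‖ * ‖v + A‖) :
    A * (W * z.re) ≤ ‖v‖ * (‖z‖ ^ 2 + W ^ 2) ∧ ‖v‖ * (W * z.re) ≤ A * (‖z‖ ^ 2 + W ^ 2) := by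
  set m := ‖v‖
  set P := ‖z + W‖
  set Q := ‖z - W‖
  have hnormSq : ∀ t : ℂ, ‖t‖ ^ 2 = t.re ^ 2 + t.im ^ 2 := fun t ↦ by
    rw [Complex.sq_norm, normSq_apply]; ring
  have hP : P ^ 2 = ‖z‖ ^ 2 + 2 * (W * z.re) + W ^ 2 := by
    simp only [P, hnormSq, add_re, add_im, ofReal_re, ofReal_im]; ring
  have hQ : Q ^ 2 = ‖z‖ ^ 2 - 2 * (W * z.re) + W ^ 2 := by
    simp only [Q, hnormSq, sub_re, sub_im, ofReal_re, ofReal_im]; ring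
  have hsub : |m - A| ≤ ‖v - A‖ := by
    simpa [abs_of_nonneg hA] using abs_norm_sub_norm_le v (A : ℂ)
  have hadd : ‖v + A‖ ≤ m + A := by
    simpa [abs_of_nonneg hA] using norm_add_le v (A : ℂ)
  have hPQ : |m - A| * P ≤ Q * (m + A) :=
    (mul_le_mul_of_nonneg_right hsub (norm_nonneg _)).trans
      (h.trans (mul_le_mul_of_nonneg_left hadd (norm_nonneg _)))
  have hP0 : 0 ≤ P := norm_nonneg _
  have hQ0 : 0 ≤ Q := norm_nonneg _
  have hlo : A * (P - Q) * (P + Q) ≤ m * (P + Q) * (P + Q) := by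
    have := (mul_le_mul_of_nonneg_right (neg_le_abs (m - A)) hP0).trans hPQ
    exact mul_le_mul_of_nonneg_right (by linarith) (add_nonneg hP0 hQ0)
  have hhi : m * (P - Q) * (P + Q) ≤ A * (P + Q) * (P + Q) := by
    have := (mul_le_mul_of_nonneg_right (le_abs_self (m - A)) hP0).trans hPQ
    exact mul_le_mul_of_nonneg_right (by linarith) (add_nonneg hP0 hQ0)
  have hdiff : (P - Q) * (P + Q) = 4 * (W * z.re) := by linear_combination hP - hQ
  have hsum : 2 * (P ^ 2 + Q ^ 2) = 4 * (‖z‖ ^ 2 + W ^ 2) := by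
    linear_combination 2 * hP + 2 * hQ
  have hsq : (P + Q) ^ 2 ≤ 2 * (P ^ 2 + Q ^ 2) := by nlinarith [sq_nonneg (P - Q)]
  constructor
  · calc A * (W * z.re) = A * (P - Q) * (P + Q) / 4 := by rw [mul_assoc, hdiff]; ring
      _ ≤ m * (P + Q) ^ 2 / 4 := by linarith
      _ ≤ m * (2 * (P ^ 2 + Q ^ 2)) / 4 := by gcongr
      _ = m * (‖z‖ ^ 2 + W ^ 2) := by rw [hsum]; ring
  · calc m * (W * z.re) = m * (P - Q) * (P + Q) / 4 := by rw [mul_assoc, hdiff]; ring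
      _ ≤ A * (P + Q) ^ 2 / 4 := by linarith
      _ ≤ A * (2 * (P ^ 2 + Q ^ 2)) / 4 := by gcongr
      _ = A * (‖z‖ ^ 2 + W ^ 2) := by rw [hsum]; ring

end Complex

namespace IsCBF

variable {h : ℂ → ℂ}

lemma differentiableOn (hh : IsCBF h) : DifferentiableOn ℂ h slitPlane := hh.1

lemma analyticOnNhd (hh : IsCBF h) : AnalyticOnNhd ℂ h slitPlane :=
  hh.differentiableOn.analyticOnNhd isOpen_slitPlane

lemma apply_ofReal (hh : IsCBF h) {x : ℝ} (hx : 0 < x) : h x = ((h x).re : ℂ) :=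
  Complex.ext rfl (by simp [(hh.2.1 x hx).1])

lemma norm_apply_ofReal (hh : IsCBF h) {x : ℝ} (hx : 0 < x) : ‖h x‖ = (h x).re := by
  conv_lhs => rw [hh.apply_ofReal hx]
  exact (norm_real _).trans (Real.norm_of_nonneg (hh.2.1 x hx).2)

lemma arg_apply_ofReal (hh : IsCBF h) {x : ℝ} (hx : 0 < x) : arg (h x) = 0 :=
  arg_eq_zero_iff.2 ⟨(hh.2.1 x hx).2, (hh.2.1 x hx).1⟩

lemma im_apply_nonneg (hh : IsCBF h) {ξ : ℂ} (hξ : ξ ∈ slitPlane) (him : 0 ≤ ξ.im) :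
    0 ≤ (h ξ).im := by
  rcases him.eq_or_lt with him | him
  · obtain ⟨x, hx, rfl⟩ := exists_pos_eq_ofReal_of_im_eq_zero hξ him.symm
    exact (hh.2.1 x hx).1.ge
  · exact hh.2.2 ξ him

theorem map_conj (hh : IsCBF h) {ξ : ℂ} (hξ : ξ ∈ slitPlane) : h (conj ξ) = conj (h ξ) := by
  have hconj : AnalyticOnNhd ℂ (conj ∘ h ∘ conj) slitPlane := by
    refine DifferentiableOn.analyticOnNhd (fun z hz ↦ ?_) isOpen_slitPlane
    have := hh.differentiableOn.differentiableAt
      (isOpen_slitPlane.mem_nhds (conj_mem_slitPlane hz))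
    exact (differentiableAt_conj_conj_iff.2 this).differentiableWithinAt
  have hreal : Tendsto ((↑) : ℝ → ℂ) (𝓝[≠] (1 : ℝ)) (𝓝[≠] (1 : ℂ)) :=
    tendsto_nhdsWithin_iff.2 ⟨(continuous_ofReal.tendsto' 1 1 ofReal_one).mono_left
      nhdsWithin_le_nhds, eventually_nhdsWithin_of_forall fun x hx ↦ by simpa using hx⟩
  have hpos : ∀ᶠ x : ℝ in 𝓝[≠] (1 : ℝ), 0 < x := nhdsWithin_le_nhds (lt_mem_nhds one_pos)
  have heq : ∃ᶠ w in 𝓝[≠] (1 : ℂ), (conj ∘ h ∘ conj) w = h w :=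
    hreal.frequently <| hpos.frequently.mono fun x hx ↦ by
      rw [Function.comp_apply, Function.comp_apply, conj_ofReal, hh.apply_ofReal hx,
        conj_ofReal]
  have := hconj.eqOn_of_preconnected_of_frequently_eq hh.analyticOnNhd isPreconnected_slitPlane
    one_mem_slitPlane heq hξ
  simp only [Function.comp_apply] at this
  rw [← this, conj_conj]

theorem eqOn_const_or_mapsTo (hh : IsCBF h) :
    (∃ c, ∀ ξ ∈ slitPlane, h ξ = c) ∨ MapsTo h slitPlane slitPlane := by
  refine (hh.analyticOnNhd.is_constant_or_isOpen isPreconnected_slitPlane).imp_right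
    fun hopen ↦ ?_
  have hup : ∀ ξ : ℂ, 0 < ξ.im → 0 < (h ξ).im := by
    have hsub : h '' {ξ | 0 < ξ.im} ⊆ interior {w | 0 ≤ w.im} :=
      interior_maximal (image_subset_iff.2 fun ξ hξ ↦ hh.2.2 ξ hξ)
        (hopen _ (fun ξ hξ ↦ Or.inr (ne_of_gt hξ)) (isOpen_lt continuous_const continuous_im))
    rw [interior_setOfPred_le_im] at hsub
    exact fun ξ hξ ↦ hsub (mem_image_of_mem h hξ)
  have hlow : ∀ ξ : ℂ, ξ.im < 0 → (h ξ).im < 0 := fun ξ hξ ↦ by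
    have := hup (conj ξ) (by simpa using hξ)
    rwa [hh.map_conj (Or.inr hξ.ne), conj_im, neg_pos] at this
  have hreal : ∀ ξ ∈ slitPlane, (h ξ).im = 0 → ∃ x : ℝ, 0 < x ∧ ξ = x := fun ξ hξ him ↦ by
    refine exists_pos_eq_ofReal_of_im_eq_zero hξ ?_
    rcases lt_trichotomy ξ.im 0 with hlt | heq | hgt
    · exact absurd him (hlow ξ hlt).ne
    · exact heq
    · exact absurd him (hup ξ hgt).ne'
  -- if `h x = 0`, the open set `h '' slitPlane` would contain negative reals
  have hne : ∀ x : ℝ, 0 < x → h x ≠ 0 := by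
    intro x hx hx0
    have hnhds : h '' slitPlane ∈ 𝓝 (0 : ℂ) := hx0 ▸ (hopen _ subset_rfl isOpen_slitPlane).mem_nhds
      (mem_image_of_mem h (ofReal_mem_slitPlane.2 hx))
    have hneg : ∀ᶠ t : ℝ in 𝓝[<] 0, (t : ℂ) ∈ h '' slitPlane :=
      nhdsWithin_le_nhds ((continuous_ofReal.tendsto' 0 0 ofReal_zero).eventually hnhds)
    obtain ⟨t, ⟨ζ, hζ, hζt⟩, ht⟩ := (hneg.and self_mem_nhdsWithin).exists
    obtain ⟨y, hy, rfl⟩ := hreal ζ hζ (by simp [hζt])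
    have := (hh.2.1 y hy).2
    rw [hζt, ofReal_re] at this
    exact absurd ht (not_lt.2 this)
  intro ξ hξ
  rcases lt_trichotomy ξ.im 0 with hlt | heq | hgt
  · exact Or.inr (hlow ξ hlt).ne
  · obtain ⟨x, hx, rfl⟩ := exists_pos_eq_ofReal_of_im_eq_zero hξ heq
    rw [hh.apply_ofReal hx, ofReal_mem_slitPlane]
    refine (hh.2.1 x hx).2.lt_of_ne fun h0 ↦ hne x hx ?_
    rw [hh.apply_ofReal hx, ← h0, ofReal_zero]
  · exact Or.inr (hup ξ hgt).ne'

theorem arg_le_arg_add_of_le (hh : IsCBF h) (hmaps : MapsTo h slitPlane slitPlane)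
    {b : ℝ} (hb : 0 < b) (hbπ : b < π) {ξ : ℂ} (hξ : ξ ∈ slitPlane) (hξ0 : 0 ≤ ξ.im)
    (hξb : arg ξ ≤ b) : arg (h ξ) ≤ arg ξ + (π - b) := by
  set F : ℂ → ℂ := fun w ↦ exp (I * w - I * log (h (exp w)))
  have hnorm : ∀ w, ‖F w‖ = Real.exp (arg (h (exp w)) - w.im) := fun w ↦ by
    simp only [F, norm_exp, sub_re, mul_re, I_re, I_im, log_im, Real.exp_eq_exp]
    ring
  have hdiff : DifferentiableOn ℂ F (im ⁻¹' Icc 0 b) := fun w hw ↦ by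
    have hexp : exp w ∈ slitPlane := exp_mem_slitPlane_of_abs_im_lt
      (abs_lt.2 ⟨by linarith [hw.1, Real.pi_pos], hw.2.trans_lt hbπ⟩)
    have hhexp : DifferentiableAt ℂ (fun w ↦ h (exp w)) w :=
      (hh.differentiableOn.differentiableAt (isOpen_slitPlane.mem_nhds hexp)).comp w
        differentiableAt_exp
    exact (((differentiableAt_id.const_mul I).sub ((hhexp.clog (hmaps hexp)).const_mul I)).cexp
      ).differentiableWithinAt
  have hfd : DiffContOnCl ℂ F (im ⁻¹' Ioo 0 b) := by
    refine DifferentiableOn.diffContOnCl ?_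
    rwa [closure_preimage_im, closure_Ioo hb.ne]
  have hgrowth : F =O[comap (_root_.abs ∘ re) atTop ⊓ 𝓟 (im ⁻¹' Ioo 0 b)]
      fun w ↦ Real.exp (π * Real.exp (0 * |w.re|)) := by
    refine Asymptotics.IsBigO.of_bound 1 (eventually_inf_principal.2 (Eventually.of_forall
      fun w hw ↦ ?_))
    simp only [hnorm, zero_mul, Real.exp_zero, mul_one, one_mul, Real.norm_eq_abs, Real.abs_exp]
    exact Real.exp_le_exp.2 (by linarith [arg_le_pi (h (exp w)), hw.1.le])
  have hle_a : ∀ w : ℂ, w.im = 0 → ‖F w‖ ≤ Real.exp (π - b) := fun w hw ↦ by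
    have hexp : exp w = (Real.exp w.re : ℂ) := by
      rw [ofReal_exp]; exact congrArg exp (Complex.ext (by simp) (by simp [hw]))
    rw [hnorm, hexp, hh.arg_apply_ofReal (Real.exp_pos _), hw]
    exact Real.exp_le_exp.2 (by linarith)
  have hle_b : ∀ w : ℂ, w.im = b → ‖F w‖ ≤ Real.exp (π - b) := fun w hw ↦ by
    rw [hnorm, hw]
    exact Real.exp_le_exp.2 (by linarith [arg_le_pi (h (exp w))])
  have hPL := PhragmenLindelof.horizontal_strip hfd ⟨0, by positivity, π, hgrowth⟩ hle_a hle_b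
    (z := log ξ) (by rw [log_im]; exact arg_nonneg_iff.2 hξ0) (by rwa [log_im])
  rw [hnorm, exp_log (slitPlane_ne_zero hξ), log_im, Real.exp_le_exp] at hPL
  linarith

theorem arg_le_arg (hh : IsCBF h) (hmaps : MapsTo h slitPlane slitPlane) {ξ : ℂ}
    (hξ : ξ ∈ slitPlane) (hξ0 : 0 ≤ ξ.im) : arg (h ξ) ≤ arg ξ := by
  have hlt : max (arg ξ) 0 < π :=
    max_lt ((arg_le_pi ξ).lt_of_ne (slitPlane_arg_ne_pi hξ)) Real.pi_pos
  have hlim : Tendsto (fun b ↦ arg ξ + (π - b)) (𝓝[<] π) (𝓝 (arg ξ)) :=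
    ((continuous_const.add (continuous_const.sub continuous_id)).tendsto' π (arg ξ)
      (by simp)).mono_left nhdsWithin_le_nhds
  refine ge_of_tendsto hlim ?_
  filter_upwards [Ioo_mem_nhdsLT hlt] with b hb
  exact hh.arg_le_arg_add_of_le hmaps ((le_max_right _ _).trans_lt hb.1) hb.2 hξ hξ0
    ((le_max_left _ _).trans hb.1.le)

theorem re_apply_sq_div_pos (hh : IsCBF h) (hmaps : MapsTo h slitPlane slitPlane) {z : ℂ}
    (hz : 0 < z.re) : 0 < (h (z ^ 2) / z).re := by
  wlog him : 0 ≤ z.im generalizing z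
  · have := this (z := conj z) (by simpa using hz) (by rw [conj_im]; linarith)
    rwa [← map_pow, hh.map_conj (sq_mem_slitPlane_of_re_pos hz), ← map_div₀, conj_re] at this
  have hz0 : z ≠ 0 := fun h0 ↦ by simp [h0] at hz
  have hsq : z ^ 2 ∈ slitPlane := sq_mem_slitPlane_of_re_pos hz
  have hθ : |arg z| < π / 2 := abs_arg_lt_pi_div_two_iff.2 (Or.inl hz)
  have hθ0 : 0 ≤ arg z := arg_nonneg_iff.2 him
  have hsq_im : 0 ≤ (z ^ 2).im := by rw [sq, mul_im]; nlinarith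
  have harg_sq : arg (z ^ 2) = 2 * arg z := by
    rw [sq, arg_mul hz0 hz0 ⟨by linarith [Real.pi_pos], by linarith [abs_lt.1 hθ]⟩]; ring
  have hlo : 0 ≤ arg (h (z ^ 2)) := arg_nonneg_iff.2 (hh.im_apply_nonneg hsq hsq_im)
  have hhi : arg (h (z ^ 2)) ≤ 2 * arg z := harg_sq ▸ hh.arg_le_arg hmaps hsq hsq_im
  have hcos : 0 < Real.cos (arg (h (z ^ 2)) - arg z) :=
    Real.cos_pos_of_mem_Ioo ⟨by linarith [abs_lt.1 hθ], by linarith [abs_lt.1 hθ]⟩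
  have hne : h (z ^ 2) ≠ 0 := slitPlane_ne_zero (hmaps hsq)
  rw [re_div_eq_norm_mul_cos_arg_sub]
  positivity

theorem harnack_of_mapsTo (hh : IsCBF h) (hmaps : MapsTo h slitPlane slitPlane) {r : ℝ}
    (hr : 0 < r) {z : ℂ} (hz : 0 < z.re) :
    ‖z‖ ^ 2 / (r + ‖z‖ ^ 2) * (z.re / ‖z‖) * (h r).re ≤ ‖h (z ^ 2)‖ ∧
      ‖h (z ^ 2)‖ ≤ (r + ‖z‖ ^ 2) / r * (‖z‖ / z.re) * (h r).re := by
  have hs : 0 < ‖z‖ := hz.trans_le (re_le_norm z)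
  set W := √r
  have hW0 : 0 < W := Real.sqrt_pos.2 hr
  have hW2 : W ^ 2 = r := Real.sq_sqrt hr.le
  have hFd : DifferentiableOn ℂ (fun v ↦ h (v ^ 2) / v) {v | 0 < v.re} :=
    (hh.differentiableOn.comp (differentiableOn_pow 2) fun v hv ↦
      sq_mem_slitPlane_of_re_pos hv).div differentiableOn_id
      fun v (hv : 0 < v.re) ↦ ne_of_apply_ne re hv.ne'
  have hFW : h ((W : ℂ) ^ 2) / W = ((h r).re / W : ℝ) := by
    rw [← ofReal_pow, hW2, ofReal_div, ← hh.apply_ofReal hr]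
  have hS := norm_sub_mul_le_of_mapsTo_re_pos hFd
    (fun v hv ↦ hh.re_apply_sq_div_pos hmaps hv) hz (w := W) (by simpa using hW0)
  simp only [hFW, conj_ofReal] at hS
  obtain ⟨hlo, hhi⟩ := harnack_of_norm_sub_mul_le (div_nonneg (hh.2.1 r hr).2 hW0.le) hS
  rw [norm_div, hW2] at hlo hhi
  constructor
  · rw [div_mul_div_comm, div_mul_eq_mul_div, div_le_iff₀ (by positivity)]
    field_simp at hlo
    nlinarith [mul_le_mul_of_nonneg_left hlo hs.le]
  · rw [div_mul_div_comm, div_mul_eq_mul_div, le_div_iff₀ (by positivity)]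
    field_simp at hhi
    rw [hW2] at hhi
    linarith

theorem harnack (hh : IsCBF h) {r : ℝ} (hr : 0 < r) {z : ℂ} (hz : 0 < z.re) :
    ‖z ^ 2‖ / (r + ‖z ^ 2‖) * (z.re / ‖z‖) * (h r).re ≤ ‖h (z ^ 2)‖ ∧
      ‖h (z ^ 2)‖ ≤ (r + ‖z ^ 2‖) / r * (‖z‖ / z.re) * (h r).re := by
  rw [norm_pow]
  rcases hh.eqOn_const_or_mapsTo with ⟨c, hc⟩ | hmaps
  · have hxs : z.re ≤ ‖z‖ := re_le_norm z
    have hconst : ‖h (z ^ 2)‖ = (h r).re := by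
      rw [hc _ (sq_mem_slitPlane_of_re_pos hz), ← hc _ (ofReal_mem_slitPlane.2 hr),
        hh.norm_apply_ofReal hr]
    have hH : 0 ≤ (h r).re := (hh.2.1 r hr).2
    rw [hconst]
    constructor
    · calc _ ≤ 1 * 1 * (h r).re := by
            gcongr
            · exact (div_le_one (by positivity)).2 (by linarith)
            · exact (div_le_one (hz.trans_le hxs)).2 hxs
        _ = (h r).re := by ring
    · calc (h r).re = 1 * 1 * (h r).re := by ring
        _ ≤ _ := by
            gcongr
            · exact (one_le_div hr).2 (by linarith [sq_nonneg ‖z‖])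
            · exact (one_le_div hz).2 hxs
  · exact hh.harnack_of_mapsTo hmaps hr hz

end IsCBF

theorem stmt_9_general (h : ℂ → ℂ) (hh : IsCBF h)
    (r : ℝ) (hr : 0 < r) (ξ : ℂ) (hξ : 0 < ξ.re ∨ ξ.im ≠ 0) :
    (1 / Real.sqrt 2) * (‖ξ‖ / (r + ‖ξ‖)) *
        ((ξ ^ ((1 : ℂ) / 2)).re / ‖ξ ^ ((1 : ℂ) / 2)‖) * (h r).re
      ≤ ‖h ξ‖ ∧
    ‖h ξ‖ ≤ Real.sqrt 2 * ((r + ‖ξ‖) / r) *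
        (‖ξ ^ ((1 : ℂ) / 2)‖ / (ξ ^ ((1 : ℂ) / 2)).re) * (h r).re := by
  have hz : 0 < (ξ ^ ((1 : ℂ) / 2)).re := re_cpow_one_half_pos hξ
  have hsq : (ξ ^ ((1 : ℂ) / 2)) ^ 2 = ξ := by rw [one_div]; exact cpow_ofNat_inv_pow ξ 2
  obtain ⟨hlo, hhi⟩ := hh.harnack hr hz
  rw [hsq] at hlo hhi
  have hsqrt2 : 1 ≤ √2 := Real.one_le_sqrt.2 one_le_two
  have hH : 0 ≤ (h r).re := (hh.2.1 r hr).2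
  simp only [mul_assoc] at hlo hhi ⊢
  constructor
  · refine (mul_le_of_le_one_left ?_ ((div_le_one (by positivity)).2 hsqrt2)).trans hlo
    exact mul_nonneg (by positivity) (mul_nonneg (div_nonneg hz.le (norm_nonneg _)) hH)
  · refine hhi.trans (le_mul_of_one_le_left ?_ hsqrt2)
    exact mul_nonneg (by positivity) (mul_nonneg (div_nonneg (norm_nonneg _) hz.le) hH)

/-- Two-sided bound for a complete Bernstein function `h` on `ℂ ∖ (−∞, 0]` in
terms of `h(r)`, `r > 0`; here `ξ^(1/2)` is the principal branch of the square
root. -/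
theorem stmt_9 (h : ℂ → ℂ) (hh : IsCBF h)
    (hnz : ∃ x : ℝ, 0 < x ∧ h x ≠ 0)
    (r : ℝ) (hr : 0 < r) (ξ : ℂ) (hξ : 0 < ξ.re ∨ ξ.im ≠ 0) :
    (1 / Real.sqrt 2) * (‖ξ‖ / (r + ‖ξ‖)) *
        ((ξ ^ ((1 : ℂ) / 2)).re / ‖ξ ^ ((1 : ℂ) / 2)‖) * (h r).re
      ≤ ‖h ξ‖ ∧
    ‖h ξ‖ ≤ Real.sqrt 2 * ((r + ‖ξ‖) / r) *
        (‖ξ ^ ((1 : ℂ) / 2)‖ / (ξ ^ ((1 : ℂ) / 2)).re) * (h r).re :=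
  stmt_9_general h hh r hr ξ hξ
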